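/- Let k be a field, t₁,…,t_r indeterminates, and f(t₁,…,t_r, x) ∈ k[t₁,…,t_r][x] a polynomial, viewed as a one-variable polynomial in x, that is indecomposable in k(t₁,…,t_r)[x] and whose degree in x is prime to the characteristic of k. Then there is a proper Zariski closed subset Z ⊊ k̄^r such that for all (t₁*,…,t_r*) ∈ k̄^r ∖ Z, the specialized polynomial f(t₁*,…,t_r*, x) ∈ k̄[x] is indecomposable in k̄[x]. -/

import Mathlib

/-!
Write `S = k[t₁, …, t_r]`, let `c` be the leading coefficient of `f` and fix a factorisation
`deg f = a * b` with `a, b ≥ 2`. Over `A = S[1/c]` the invertibility of `a * c` lets one solve,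
coefficient by coefficient from the top, for the approximate root `G`: the unique monic `G` of
degree `b` with `G(0) = 0` such that `c * G ^ a` agrees with `f` in all degrees above `a * b - b`. A
decomposition `u ∘ g` over a field with `deg u = a`, `deg g = b`, normalised so that `g` is monic
with `g(0) = 0`, makes `g` an approximate root, so after specialisation `g` is the image of `G`. But
`f = u ∘ G` exactly when all digits of the `G`-adic expansion of `f` are constant. As `f` is
indecomposable over `Frac S`, some digit has a non-constant coefficient `q = s / c ^ n`, and
wherever `c s` does not vanish the specialised digit stays non-constant. `Z` is `c` times the
product of these `s` over all factorisations.
-/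

open Polynomial

/-- A one-variable polynomial over a field is indecomposable if it is non-constant and
cannot be written as `u ∘ g` with both `u` and `g` of degree at least 2. -/
def IndecomposablePoly {K : Type*} [Field K] (f : K[X]) : Prop :=
  0 < f.natDegree ∧
    ¬ ∃ u g : K[X], 2 ≤ u.natDegree ∧ 2 ≤ g.natDegree ∧ f = u.comp g

open Finset

namespace Polynomial

section AdicDigit

variable {R S : Type*} [CommRing R] [CommRing S]

noncomputable def adicDigit (g : R[X]) : R[X] → ℕ → R[X]
  | f, 0 => f %ₘ g
  | f, k + 1 => adicDigit g (f /ₘ g) k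

theorem adicDigit_map (φ : R →+* S) {g : R[X]} (hg : g.Monic) (f : R[X]) (k : ℕ) :
    (adicDigit g f k).map φ = adicDigit (g.map φ) (f.map φ) k := by
  induction k generalizing f with
  | zero => simp [adicDigit, map_modByMonic φ hg]
  | succ k ih => simp [adicDigit, ih, map_divByMonic φ hg]

theorem comp_divByMonic_and_modByMonic {g : R[X]} (hg : g.Monic) (hg0 : 0 < g.natDegree)
    (u : R[X]) : (u.comp g) /ₘ g = u.divX.comp g ∧ (u.comp g) %ₘ g = C (u.coeff 0) := by
  refine div_modByMonic_unique _ _ hg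
    ⟨?_, degree_C_le.trans_lt (natDegree_pos_iff_degree_pos.mp hg0)⟩
  conv_rhs => rw [← X_mul_divX_add u]
  rw [add_comp, mul_comp, X_comp, C_comp]
  ring

theorem adicDigit_comp {g : R[X]} (hg : g.Monic) (hg0 : 0 < g.natDegree) (u : R[X]) (k : ℕ) :
    adicDigit g (u.comp g) k = C (u.coeff k) := by
  induction k generalizing u with
  | zero => exact (comp_divByMonic_and_modByMonic hg hg0 u).2
  | succ k ih => rw [adicDigit, (comp_divByMonic_and_modByMonic hg hg0 u).1, ih, coeff_divX]

variable [Nontrivial R]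

theorem eq_sum_adicDigit_mul_pow {g : R[X]} (hg : g.Monic) (N : ℕ) {f : R[X]}
    (hf : f.natDegree < (N + 1) * g.natDegree) :
    f = ∑ i ∈ range (N + 1), adicDigit g f i * g ^ i := by
  induction N generalizing f with
  | zero =>
    have hfg : f.degree < g.degree := degree_lt_degree (by simpa using hf)
    simp [adicDigit, (modByMonic_eq_self_iff hg).2 hfg]
  | succ N ih =>
    have hdiv : (f /ₘ g).natDegree < (N + 1) * g.natDegree := by
      rw [natDegree_divByMonic f hg]
      have hle : g.natDegree ≤ (N + 1) * g.natDegree := Nat.le_mul_of_pos_left _ N.succ_pos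
      rw [add_mul, one_mul] at hf
      omega
    calc f = f %ₘ g + g * (f /ₘ g) := (modByMonic_add_div f g).symm
      _ = _ := by
        rw [ih hdiv, sum_range_succ' _ (N + 1), mul_sum]
        simp only [adicDigit, pow_zero, mul_one, pow_succ]
        rw [add_comm]
        exact congrArg₂ _ (sum_congr rfl fun i _ => by ring) rfl

theorem exists_eq_comp_of_natDegree_adicDigit_eq_zero {g f : R[X]} (hg : g.Monic) {N : ℕ}
    (hf : f.natDegree < (N + 1) * g.natDegree) (hdigit : ∀ i, (adicDigit g f i).natDegree = 0) :
    ∃ U : R[X], f = U.comp g := by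
  refine ⟨∑ i ∈ range (N + 1), C ((adicDigit g f i).coeff 0) * X ^ i, ?_⟩
  conv_lhs => rw [eq_sum_adicDigit_mul_pow hg N hf]
  simp only [sum_comp, mul_comp, C_comp, X_pow_comp]
  exact sum_congr rfl fun i _ => by rw [← eq_C_of_natDegree_eq_zero (hdigit i)]

end AdicDigit

section ApproxRoot

variable {R S : Type*} [CommRing R] [CommRing S]

theorem coeff_add_pow_of_natDegree_le {Q P : R[X]} {a b E m : ℕ} (hQ : Q.natDegree ≤ b)
    (hP : P.natDegree ≤ E) (hE : E < b) (ha : 0 < a) (hm : a * b - (b - E) ≤ m) :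
    ((Q + P) ^ a).coeff m = (Q ^ a).coeff m + a * (Q ^ (a - 1) * P).coeff m := by
  obtain ⟨a, rfl⟩ : ∃ a', a = a' + 1 := ⟨a - 1, by omega⟩
  have hlow : ∀ t ∈ range a,
      (Q ^ t * P ^ (a + 1 - t) * ((a + 1).choose t : R[X])).coeff m = 0 := by
    intro t ht
    have ht : t < a := mem_range.1 ht
    apply coeff_eq_zero_of_natDegree_lt
    refine lt_of_le_of_lt (natDegree_mul_le_of_le (natDegree_mul_le_of_le
      (natDegree_pow_le_of_le t hQ) (natDegree_pow_le_of_le (a + 1 - t) hP))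
      (natDegree_natCast _).le) ?_
    set s := a + 1 - t
    have hts : (a + 1) * b = t * b + s * b := by rw [← add_mul]; congr 1; omega
    have hsb : s * E + 2 * (b - E) ≤ s * b := by
      have h2 : 2 * (b - E) ≤ s * (b - E) := Nat.mul_le_mul_right _ (by omega)
      have hsplit : s * E + s * (b - E) = s * b := by rw [← Nat.mul_add]; congr 1; omega
      omega
    omega
  rw [add_pow, finsetSum_coeff, sum_range_succ, sum_range_succ, sum_eq_zero hlow,
    Nat.choose_succ_self_right, Nat.choose_self]
  simp only [zero_add, Nat.add_sub_cancel_left, Nat.sub_self, pow_one, pow_zero, mul_one,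
    Nat.cast_one, Nat.add_sub_cancel, coeff_mul_natCast]
  push_cast
  ring

theorem coeff_C_mul_add_monomial_pow {Q : R[X]} {a b E m : ℕ} (hQ : Q.Monic)
    (hQb : Q.natDegree = b) (hE : E < b) (ha : 0 < a) (hm : a * b - (b - E) ≤ m) (c δ : R) :
    (C c * (Q + monomial E δ) ^ a).coeff m =
      (C c * Q ^ a).coeff m + if m = a * b - (b - E) then a * c * δ else 0 := by
  have hab : b ≤ a * b := Nat.le_mul_of_pos_left b ha
  obtain ⟨n, rfl⟩ : ∃ n, m = n + E := ⟨m - E, by omega⟩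
  rw [coeff_C_mul, coeff_C_mul, coeff_add_pow_of_natDegree_le hQb.le (natDegree_monomial_le δ)
    hE ha hm, coeff_mul_monomial]
  have hdeg : (Q ^ (a - 1)).natDegree = a * b - b := by
    rw [hQ.natDegree_pow, hQb, Nat.sub_one_mul]
  split_ifs with h
  · rw [show n = (Q ^ (a - 1)).natDegree by omega, (hQ.pow _).coeff_natDegree]
    ring
  · rw [coeff_eq_zero_of_natDegree_lt (p := Q ^ (a - 1)) (by omega)]
    ring

/-- Approximate `a`-th root in the sense of Abhyankar–Moh, normalised by `G(0) = 0`. -/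
structure IsApproxRoot (c : R) (a b : ℕ) (f G : R[X]) : Prop where
  isMonicOfDegree : IsMonicOfDegree G b
  coeff_zero : G.coeff 0 = 0
  coeff_eq : ∀ m, a * b - b < m → (C c * G ^ a).coeff m = f.coeff m

namespace IsApproxRoot

variable {c : R} {a b : ℕ} {f G : R[X]}

theorem map [Nontrivial S] (hG : IsApproxRoot c a b f G) (φ : R →+* S) :
    IsApproxRoot (φ c) a b (f.map φ) (G.map φ) where
  isMonicOfDegree :=
    ⟨by rw [hG.isMonicOfDegree.monic.natDegree_map, hG.isMonicOfDegree.natDegree_eq],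
      hG.isMonicOfDegree.monic.map φ⟩
  coeff_zero := by rw [coeff_map, hG.coeff_zero, map_zero]
  coeff_eq m hm := by
    rw [← map_C, ← Polynomial.map_pow, ← Polynomial.map_mul, coeff_map, coeff_map,
      hG.coeff_eq m hm]

theorem coeff_mul_eq (hG : IsApproxRoot c a b f G) (ha : 0 < a) (hb : 0 < b) :
    f.coeff (a * b) = c := by
  have hab : b ≤ a * b := Nat.le_mul_of_pos_left b ha
  have hGa := hG.isMonicOfDegree.pow a
  rw [← hG.coeff_eq _ (by omega), coeff_C_mul, mul_comm a, ← hGa.natDegree_eq,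
    hGa.monic.coeff_natDegree, mul_one]

theorem unique {L : Type*} [Field L] {c : L} {f g h : L[X]} (hg : IsApproxRoot c a b f g)
    (hh : IsApproxRoot c a b f h) (ha : (a : L) ≠ 0) (hc : c ≠ 0) : g = h := by
  by_contra hne
  set D := g - h
  have hD0 : D ≠ 0 := sub_ne_zero.2 hne
  have hg' := hg.isMonicOfDegree
  have hh' := hh.isMonicOfDegree
  have hb : b ≠ 0 := by
    rintro rfl
    exact hne ((isMonicOfDegree_zero_iff.1 hg').trans (isMonicOfDegree_zero_iff.1 hh').symm)
  have hDb : D.natDegree < b := hg'.natDegree_sub_lt hb hh'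
  have hD : 0 < D.natDegree := by
    refine Nat.pos_of_ne_zero fun h0 => hD0 ?_
    rw [eq_C_of_natDegree_eq_zero h0, coeff_sub, hg.coeff_zero, hh.coeff_zero, sub_self, map_zero]
  have ha0 : 0 < a := Nat.pos_of_ne_zero fun h0 => ha (by rw [h0, Nat.cast_zero])
  have hab : b ≤ a * b := Nat.le_mul_of_pos_left b ha0
  set m := a * b - (b - D.natDegree)
  have hpow : (g ^ a).coeff m = (h ^ a).coeff m := by
    refine mul_left_cancel₀ hc ?_
    rw [← coeff_C_mul, ← coeff_C_mul, hg.coeff_eq m (by omega), hh.coeff_eq m (by omega)]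
  have hlead : (h ^ (a - 1) * D).coeff m = D.leadingCoeff := by
    have hdeg : (h ^ (a - 1) * D).natDegree = m := by
      rw [(hh'.monic.pow _).natDegree_mul' hD0, hh'.monic.natDegree_pow, hh'.natDegree_eq,
        Nat.sub_one_mul]
      omega
    rw [← hdeg, coeff_natDegree, leadingCoeff_monic_mul (hh'.monic.pow _)]
  have key := coeff_add_pow_of_natDegree_le hh'.natDegree_eq.le le_rfl hDb ha0 (m := m) le_rfl
  rw [add_sub_cancel, hpow, hlead, left_eq_add] at key
  exact mul_ne_zero ha (leadingCoeff_ne_zero.2 hD0) key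

end IsApproxRoot

theorem exists_isApproxRoot [Nontrivial R] {c : R} {a b : ℕ} {f : R[X]} (ha : 0 < a)
    (hb : 0 < b) (hac : IsUnit ((a : R) * c)) (hf : f.natDegree ≤ a * b)
    (hfc : f.coeff (a * b) = c) : ∃ G, IsApproxRoot c a b f G := by
  obtain ⟨e, he⟩ := hac.exists_right_inv
  have hab : b ≤ a * b := Nat.le_mul_of_pos_left b ha
  suffices h : ∀ j < b, ∃ G : R[X], IsMonicOfDegree G b ∧ G.coeff 0 = 0 ∧
      ∀ m, a * b - j ≤ m → (C c * G ^ a).coeff m = f.coeff m by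
    obtain ⟨G, hG, hG0, hGf⟩ := h (b - 1) (by omega)
    exact ⟨G, ⟨hG, hG0, fun m hm => hGf m (by omega)⟩⟩
  intro j
  induction j with
  | zero =>
    intro _
    refine ⟨X ^ b, isMonicOfDegree_X_pow R b, by simp [hb.ne], fun m hm => ?_⟩
    rw [← pow_mul, coeff_C_mul_X_pow, mul_comm b]
    rcases (Nat.sub_zero _ ▸ hm).eq_or_lt with rfl | hlt
    · rw [if_pos rfl, hfc]
    · rw [if_neg hlt.ne', coeff_eq_zero_of_natDegree_lt (hf.trans_lt hlt)]
  | succ j ih =>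
    intro hj
    obtain ⟨Q, hQ, hQ0, hQf⟩ := ih (by omega)
    -- the next coefficient is corrected by a single monomial of degree `b - (j + 1)`
    set m₀ := a * b - (j + 1)
    set E := b - (j + 1)
    set δ := e * (f.coeff m₀ - (C c * Q ^ a).coeff m₀)
    have hE : (monomial E δ).natDegree < b := (natDegree_monomial_le δ).trans_lt (by omega)
    refine ⟨Q + monomial E δ, hQ.add_right hE, ?_, fun m hm => ?_⟩
    · rw [coeff_add, hQ0, coeff_monomial, if_neg (by omega), add_zero]
    rw [coeff_C_mul_add_monomial_pow hQ.monic hQ.natDegree_eq (by omega) ha (by omega) c δ]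
    split_ifs with h
    · obtain rfl : m = m₀ := by omega
      linear_combination (f.coeff m₀ - (C c * Q ^ a).coeff m₀) * he
    · rw [add_zero, hQf m (by omega)]

theorem isApproxRoot_comp {u g : R[X]} {a b : ℕ} (hg : IsMonicOfDegree g b)
    (hg0 : g.coeff 0 = 0) (hu : u.natDegree ≤ a) : IsApproxRoot (u.coeff a) a b (u.comp g) g where
  isMonicOfDegree := hg
  coeff_zero := hg0
  coeff_eq m hm := by
    set v := u - C (u.coeff a) * X ^ a
    have hv : v.natDegree ≤ a - 1 :=
      natDegree_le_pred ((natDegree_sub_le _ _).trans (max_le hu (natDegree_C_mul_X_pow_le _ _)))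
        (by simp [v])
    have hvg : (v.comp g).natDegree < m := by
      refine natDegree_comp_le.trans_lt (lt_of_le_of_lt ?_ hm)
      rw [hg.natDegree_eq, ← Nat.sub_one_mul]
      exact Nat.mul_le_mul_right _ hv
    have hu' : u = C (u.coeff a) * X ^ a + v := by ring
    conv_rhs => rw [hu']
    rw [add_comp, coeff_add, coeff_eq_zero_of_natDegree_lt hvg, add_zero, mul_comp, C_comp,
      X_pow_comp]

theorem exists_normalized_comp_eq {L : Type*} [Field L] (u g : L[X])
    (hg : 0 < g.natDegree) : ∃ u' g' : L[X], u'.natDegree = u.natDegree ∧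
      IsMonicOfDegree g' g.natDegree ∧ g'.coeff 0 = 0 ∧ u.comp g = u'.comp g' := by
  set e := g.leadingCoeff
  have he : e ≠ 0 := leadingCoeff_ne_zero.2 (ne_zero_of_natDegree_gt hg)
  set g' := C e⁻¹ * (g - C (g.coeff 0))
  have hg' : g = (C e * X + C (g.coeff 0)).comp g' := by
    simp only [g', add_comp, mul_comp, C_comp, X_comp, ← mul_assoc, ← C_mul, mul_inv_cancel₀ he,
      C_1, one_mul, sub_add_cancel]
  refine ⟨u.comp (C e * X + C (g.coeff 0)), g', ?_, ?_, by simp [g'], by rw [comp_assoc, ← hg']⟩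
  · rw [natDegree_comp, natDegree_linear he, mul_one]
  · refine (isMonicOfDegree_iff _ _).2 ⟨?_, ?_⟩
    · rw [natDegree_C_mul (inv_ne_zero he), natDegree_sub_C]
    · rw [coeff_C_mul, coeff_sub, coeff_C, if_neg hg.ne', sub_zero, ← leadingCoeff,
        inv_mul_cancel₀ he]

end ApproxRoot

end Polynomial

theorem not_exists_comp_of_coeff_adicDigit_ne_zero {A K : Type*} [CommRing A] [Field K]
    {c : A} {a b i j : ℕ} {f G : A[X]} (hG : IsApproxRoot c a b f G) (ha : 0 < a) (hb : 0 < b)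
    (hj : j ≠ 0) (φ : A →+* K) (haK : (a : K) ≠ 0) (hc : φ c ≠ 0)
    (hq : φ ((adicDigit G f i).coeff j) ≠ 0) :
    ¬ ∃ u g : K[X], u.natDegree = a ∧ g.natDegree = b ∧ f.map φ = u.comp g := by
  rintro ⟨u, g, rfl, rfl, hfug⟩
  obtain ⟨u', g', hu', hg', hg'0, hug⟩ := exists_normalized_comp_eq u g hb
  have h₁ : IsApproxRoot (u'.coeff u.natDegree) u.natDegree g.natDegree (f.map φ) g' := by
    rw [hfug, hug]
    exact isApproxRoot_comp hg' hg'0 hu'.le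
  have h₂ := hG.map φ
  have hlead : u'.coeff u.natDegree = φ c :=
    (h₁.coeff_mul_eq ha hb).symm.trans (h₂.coeff_mul_eq ha hb)
  have hg'G : g' = G.map φ := (hlead ▸ h₁).unique h₂ haK hc
  apply hq
  have hdigit := adicDigit_map φ hG.isMonicOfDegree.monic f i
  rw [hfug, hug, ← hg'G, adicDigit_comp hg'.monic (hg'.natDegree_eq ▸ hb)] at hdigit
  simpa [coeff_C, hj] using congr(coeff $hdigit j)

theorem exists_natDegree_adicDigit_pos {A F : Type*} [CommRing A] [Field F] (ψ : A →+* F)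
    {f G : A[X]} (hf : IndecomposablePoly (f.map ψ)) {a b : ℕ} (ha : 2 ≤ a) (hb : 2 ≤ b)
    (hfA : f.natDegree ≤ a * b) (hab : (f.map ψ).natDegree = a * b) (hG : IsMonicOfDegree G b) :
    ∃ i, 0 < (adicDigit G f i).natDegree := by
  by_contra! hconst
  have : Nontrivial A := ψ.domain_nontrivial
  obtain ⟨U, hU⟩ := exists_eq_comp_of_natDegree_adicDigit_eq_zero hG.monic (N := a)
    (by rw [add_mul, one_mul, hG.natDegree_eq]; omega) fun i => Nat.le_zero.1 (hconst i)
  have hUG : f.map ψ = (U.map ψ).comp (G.map ψ) := by rw [hU, map_comp]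
  have hGψ : (G.map ψ).natDegree = b := by rw [hG.monic.natDegree_map, hG.natDegree_eq]
  have hUψ : (U.map ψ).natDegree = a := by
    have h := congrArg natDegree hUG
    rw [natDegree_comp, hGψ, hab] at h
    exact (Nat.eq_of_mul_eq_mul_right (by omega) h).symm
  exact hf.2 ⟨_, _, hUψ ▸ ha, hGψ ▸ hb, hUG⟩

theorem IsLocalization.Away.exists_ne_zero_forall_lift_ne_zero {S A K : Type*} [CommRing S]
    [CommRing A] [Algebra S A] [CommRing K] (c : S) [IsLocalization.Away c A] {q : A}
    (hq : q ≠ 0) : ∃ s : S, s ≠ 0 ∧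
      ∀ (φ : S →+* K) (hφ : IsUnit (φ c)), φ s ≠ 0 → IsLocalization.Away.lift c hφ q ≠ 0 := by
  obtain ⟨n, s, hs⟩ := IsLocalization.Away.surj c q
  refine ⟨s, fun hs0 => hq ?_, fun φ hφ hφs hq0 => hφs ?_⟩
  · rw [hs0, map_zero] at hs
    exact ((IsLocalization.Away.algebraMap_isUnit (S := A) c).pow n).mul_left_eq_zero.1 hs
  · rw [← IsLocalization.Away.lift_eq (S := A) c hφ s, ← hs, map_mul, hq0, zero_mul]

theorem exists_ne_zero_forall_not_exists_comp {S K : Type*} [CommRing S] [IsDomain S] [Field K]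
    {f : S[X]} (hf : IndecomposablePoly (f.map (algebraMap S (FractionRing S)))) {a b : ℕ}
    (ha : 2 ≤ a) (hb : 2 ≤ b) (hab : a * b = f.natDegree) (haS : IsUnit (a : S)) :
    ∃ s : S, s ≠ 0 ∧ ∀ φ : S →+* K, φ f.leadingCoeff ≠ 0 → φ s ≠ 0 →
      ¬ ∃ u g : K[X], u.natDegree = a ∧ g.natDegree = b ∧ f.map φ = u.comp g := by
  set c := f.leadingCoeff
  have hc : c ≠ 0 :=
    leadingCoeff_ne_zero.2 (ne_zero_of_natDegree_gt (n := 0) (by rw [← hab]; positivity))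
  let A := Localization.Away c
  have hcA : IsUnit (algebraMap S A c) := IsLocalization.Away.algebraMap_isUnit c
  have : IsDomain A :=
    IsLocalization.isDomain_localization (powers_le_nonZeroDivisors_of_noZeroDivisors hc)
  set fA := f.map (algebraMap S A)
  obtain ⟨G, hG⟩ := exists_isApproxRoot (f := fA) (by omega) (by omega)
    (by simpa using (haS.map (algebraMap S A)).mul hcA) (natDegree_map_le.trans hab.ge)
    (by rw [coeff_map, hab]; rfl)
  have hcF : IsUnit (algebraMap S (FractionRing S) c) :=
    isUnit_iff_ne_zero.2 ((map_ne_zero_iff _ (IsFractionRing.injective S _)).2 hc)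
  let ψ : A →+* FractionRing S := IsLocalization.Away.lift c hcF
  have hψ : fA.map ψ = f.map (algebraMap S (FractionRing S)) := by
    rw [Polynomial.map_map, IsLocalization.Away.lift_comp]
  obtain ⟨i, hi⟩ := exists_natDegree_adicDigit_pos ψ (hψ ▸ hf) ha hb
    (natDegree_map_le.trans hab.ge)
    (by rw [hψ, natDegree_map_eq_of_injective (IsFractionRing.injective S _), hab])
    hG.isMonicOfDegree
  obtain ⟨s, hs0, hs⟩ :=
    IsLocalization.Away.exists_ne_zero_forall_lift_ne_zero (K := K) c
      (leadingCoeff_ne_zero.2 (ne_zero_of_natDegree_gt hi))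
  refine ⟨s, hs0, fun φ hφc hφs => ?_⟩
  have hφc' : IsUnit (φ c) := isUnit_iff_ne_zero.2 hφc
  have hφ' : (IsLocalization.Away.lift c hφc').comp (algebraMap S A) = φ :=
    IsLocalization.Away.lift_comp c _
  rw [← hφ', ← Polynomial.map_map]
  refine not_exists_comp_of_coeff_adicDigit_ne_zero hG (by omega) (by omega) hi.ne' _ ?_ ?_
    (hs φ hφc' hφs)
  · simpa using (haS.map φ).ne_zero
  · rwa [← RingHom.comp_apply, hφ']

theorem exists_ne_zero_forall_indecomposablePoly_map {S K : Type*} [CommRing S] [IsDomain S]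
    [Field K] {f : S[X]} (hf : IndecomposablePoly (f.map (algebraMap S (FractionRing S))))
    (hunit : ∀ a, a ∣ f.natDegree → IsUnit (a : S)) :
    ∃ Z : S, Z ≠ 0 ∧ ∀ φ : S →+* K, φ Z ≠ 0 → IndecomposablePoly (f.map φ) := by
  have hn : 0 < f.natDegree := by
    simpa [natDegree_map_eq_of_injective (IsFractionRing.injective _ _)] using hf.1
  set P := f.natDegree.divisorsAntidiagonal.filter fun p => 2 ≤ p.1 ∧ 2 ≤ p.2
  have key : ∀ p ∈ P, ∃ s : S, s ≠ 0 ∧ ∀ φ : S →+* K, φ f.leadingCoeff ≠ 0 → φ s ≠ 0 →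
      ¬ ∃ u g : K[X], u.natDegree = p.1 ∧ g.natDegree = p.2 ∧ f.map φ = u.comp g := by
    intro p hp
    obtain ⟨⟨hab, -⟩, ha, hb⟩ := by simpa [P] using hp
    exact exists_ne_zero_forall_not_exists_comp hf ha hb hab (hunit _ (Dvd.intro _ hab))
  choose! s hs0 hs using key
  refine ⟨f.leadingCoeff * ∏ p ∈ P, s p, mul_ne_zero (leadingCoeff_ne_zero.2
    (ne_zero_of_natDegree_gt hn)) (prod_ne_zero_iff.2 hs0), fun φ hZ => ?_⟩
  rw [map_mul, map_prod, mul_ne_zero_iff, prod_ne_zero_iff] at hZ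
  obtain ⟨hφc, hφs⟩ := hZ
  have hdeg := natDegree_map_of_leadingCoeff_ne_zero φ hφc
  refine ⟨hdeg ▸ hn, ?_⟩
  rintro ⟨u, g, hu, hg, hfug⟩
  have hmem : (u.natDegree, g.natDegree) ∈ P := mem_filter.2
    ⟨Nat.mem_divisorsAntidiagonal.2 ⟨by rw [← natDegree_comp, ← hfug, hdeg], hn.ne'⟩, hu, hg⟩
  exact hs _ hmem φ hφc (hφs _ hmem) ⟨u, g, rfl, rfl, hfug⟩

theorem natCast_ne_zero_of_dvd_of_ringChar {R : Type*} [NonAssocSemiring R] {a n : ℕ}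
    (hchar : ringChar R = 0 ∨ ¬ ringChar R ∣ n) (hn : n ≠ 0) (ha : a ∣ n) : (a : R) ≠ 0 := by
  rw [Ne, ringChar.spec]
  intro hdvd
  rcases hchar with h | h
  · rw [h, zero_dvd_iff] at hdvd
    exact hn (zero_dvd_iff.1 (hdvd ▸ ha))
  · exact h (hdvd.trans ha)

theorem specialization_of_parameters (k : Type*) [Field k] (r : ℕ)
    (f : Polynomial (MvPolynomial (Fin r) k))
    (hf : IndecomposablePoly
      (f.map (algebraMap (MvPolynomial (Fin r) k) (FractionRing (MvPolynomial (Fin r) k)))))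
    (hchar : ringChar k = 0 ∨ ¬ (ringChar k ∣ f.natDegree)) :
    ∃ Z : MvPolynomial (Fin r) (AlgebraicClosure k), Z ≠ 0 ∧
      ∀ ts : Fin r → AlgebraicClosure k, MvPolynomial.eval ts Z ≠ 0 →
        IndecomposablePoly
          (f.map (MvPolynomial.eval₂Hom (algebraMap k (AlgebraicClosure k)) ts)) := by
  have hn : f.natDegree ≠ 0 := by
    simpa [natDegree_map_eq_of_injective (IsFractionRing.injective _ _)] using hf.1.ne'
  obtain ⟨Z, hZ, hZφ⟩ := exists_ne_zero_forall_indecomposablePoly_map (K := AlgebraicClosure k) hf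
    fun a ha => by
      rw [← map_natCast MvPolynomial.C]
      exact (isUnit_iff_ne_zero.2 (natCast_ne_zero_of_dvd_of_ringChar hchar hn ha)).map _
  refine ⟨MvPolynomial.map (algebraMap k _) Z, ?_, fun ts hts => hZφ _ ?_⟩
  · exact (map_ne_zero_iff _ (MvPolynomial.map_injective _ (algebraMap k _).injective)).2 hZ
  · rwa [MvPolynomial.eval_map] at hts
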